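/- arXiv:1304.7872 — 6 statements merged into one kernel-verified Lean document; each statement's English description precedes it below -/
import Mathlib

section
/- For every positive integer m, the finite sequence {d_ℓ(m)}_{ℓ=0}^{m} is unimodal; that is, there exists an index j with 0 ≤ j ≤ m such that d_0(m) ≤ d_1(m) ≤ ... ≤ d_j(m) and d_j(m) ≥ d_{j+1}(m) ≥ ... ≥ d_m(m). -/
/-- `d m ℓ = 2^{-2m} ∑_{k=ℓ}^{m} 2^k C(2m-2k, m-k) C(m+k, m) C(k, ℓ)`. -/
noncomputable def d (m ℓ : ℕ) : ℝ :=
  ((2 : ℝ) ^ (2 * m))⁻¹ *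
    ∑ k ∈ Finset.Icc ℓ m,
      (2 : ℝ) ^ k * (Nat.choose (2 * m - 2 * k) (m - k) : ℝ) *
        (Nat.choose (m + k) m : ℝ) * (Nat.choose k ℓ : ℝ)

/-- The summand without the final binomial coefficient. -/
noncomputable def dT (m k : ℕ) : ℝ :=
  (2 : ℝ) ^ k * (Nat.choose (2 * m - 2 * k) (m - k) : ℝ) * (Nat.choose (m + k) m : ℝ)

lemma dT_nonneg (m k : ℕ) : 0 ≤ dT m k := by unfold dT; positivity

lemma d_eq (m l : ℕ) :
    d m l = ((2 : ℝ) ^ (2 * m))⁻¹ * ∑ k ∈ Finset.Icc l m, dT m k * (Nat.choose k l : ℝ) := rfl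

lemma d_nonneg (m l : ℕ) : 0 ≤ d m l := by
  rw [d_eq]
  apply mul_nonneg (by positivity)
  exact Finset.sum_nonneg fun k _ => mul_nonneg (dT_nonneg m k) (by positivity)

lemma ratio_bound_sum (m l : ℕ) (h : l < m) :
    ((l : ℝ) + 1) * ∑ k ∈ Finset.Icc (l+1) m, dT m k * (Nat.choose k (l+1) : ℝ)
      ≤ ((m : ℝ) - l) * ∑ k ∈ Finset.Icc l m, dT m k * (Nat.choose k l : ℝ) := by
  rw [Finset.mul_sum, Finset.mul_sum]
  have hsub : Finset.Icc (l+1) m ⊆ Finset.Icc l m := by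
    apply Finset.Icc_subset_Icc_left; omega
  have step2 : ∑ k ∈ Finset.Icc (l+1) m, ((m : ℝ) - l) * (dT m k * (Nat.choose k l : ℝ))
      ≤ ∑ k ∈ Finset.Icc l m, ((m : ℝ) - l) * (dT m k * (Nat.choose k l : ℝ)) := by
    apply Finset.sum_le_sum_of_subset_of_nonneg hsub
    intro k hk _
    have : (0:ℝ) ≤ (m:ℝ) - l := by
      have : (l:ℝ) ≤ m := by exact_mod_cast h.le
      linarith
    exact mul_nonneg this (mul_nonneg (dT_nonneg m k) (by positivity))
  refine le_trans ?_ step2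
  apply Finset.sum_le_sum
  intro k hk
  simp only [Finset.mem_Icc] at hk
  have hkl : l + 1 ≤ k := hk.1
  have hkm : k ≤ m := hk.2
  have key : (Nat.choose k (l+1) : ℝ) * (l+1) = (Nat.choose k l : ℝ) * ((k : ℝ) - l) := by
    have := Nat.choose_succ_right_eq k l
    have hc : ((Nat.choose k (l+1) * (l+1) : ℕ) : ℝ) = ((Nat.choose k l * (k - l) : ℕ) : ℝ) := by
      exact_mod_cast congrArg (Nat.cast (R := ℝ)) this
    push_cast [Nat.cast_sub (by omega : l ≤ k)] at hc
    exact_mod_cast hc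
  have hT := dT_nonneg m k
  have h1 : ((l:ℝ)+1) * (dT m k * (Nat.choose k (l+1) : ℝ))
      = dT m k * ((Nat.choose k (l+1) : ℝ) * (l+1)) := by ring
  rw [h1, key]
  have hkm' : ((k:ℝ) - l) ≤ ((m:ℝ) - l) := by
    have : (k:ℝ) ≤ m := by exact_mod_cast hkm
    linarith
  have hkl' : (0:ℝ) ≤ (k:ℝ) - l := by
    have : (l:ℝ) ≤ k := by exact_mod_cast (by omega : l ≤ k)
    linarith
  calc dT m k * ((Nat.choose k l : ℝ) * ((k : ℝ) - l))
      ≤ dT m k * ((Nat.choose k l : ℝ) * ((m : ℝ) - l)) := by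
        apply mul_le_mul_of_nonneg_left _ hT
        apply mul_le_mul_of_nonneg_left hkm' (by positivity)
    _ = ((m:ℝ) - l) * (dT m k * (Nat.choose k l : ℝ)) := by ring

lemma ratio_d (m l : ℕ) (h : l < m) :
    ((l:ℝ)+1) * d m (l+1) ≤ ((m:ℝ) - l) * d m l := by
  have hc : (0:ℝ) ≤ ((2:ℝ)^(2*m))⁻¹ := by positivity
  calc ((l:ℝ)+1) * d m (l+1)
      = ((2:ℝ)^(2*m))⁻¹ * (((l:ℝ)+1) * ∑ k ∈ Finset.Icc (l+1) m, dT m k * (Nat.choose k (l+1) : ℝ)) := by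
        rw [d_eq]; ring
    _ ≤ ((2:ℝ)^(2*m))⁻¹ * (((m:ℝ)-l) * ∑ k ∈ Finset.Icc l m, dT m k * (Nat.choose k l : ℝ)) :=
        mul_le_mul_of_nonneg_left (ratio_bound_sum m l h) hc
    _ = ((m:ℝ) - l) * d m l := by rw [d_eq]; ring

set_option maxHeartbeats 1000000 in
lemma d_tele (m l k : ℕ) (hl : 1 ≤ l) (hk1 : l - 1 ≤ k) (hk2 : k < m) :
    ((k:ℝ)+1-l+1) * (2*(m:ℝ)+1-2*((k:ℝ)+1)) * dT m (k+1) * (Nat.choose (k+1) (l-1) : ℝ)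
      - ((k:ℝ)-l+1) * (2*(m:ℝ)+1-2*(k:ℝ)) * dT m k * (Nat.choose k (l-1) : ℝ)
    = dT m k * (Nat.choose k (l-1) : ℝ) * (((m:ℝ)+l-k)^2 - ((l:ℝ)^2 - l + m + 1)) := by
  have hn : 1 ≤ m - k := by omega
  set n := m - k with hndef
  have e1 : 2*m - 2*k = 2*n := by omega
  have e2 : 2*m - 2*(k+1) = 2*n - 2 := by omega
  have e3 : m - (k+1) = n - 1 := by omega
  unfold dT
  rw [e1, e2, e3]
  have hA : n * Nat.choose (2*n) n = 2*(2*n-1) * Nat.choose (2*n-2) (n-1) := by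
    have h := Nat.succ_mul_centralBinom_succ (n-1)
    simp only [Nat.centralBinom] at h
    have h1 : n - 1 + 1 = n := by omega
    rw [h1] at h
    have h2 : 2*(n-1)+1 = 2*n-1 := by omega
    have h3 : 2*(n-1) = 2*n-2 := by omega
    rw [h2, h3] at h
    exact h
  have hB : (k+1) * Nat.choose (m+(k+1)) m = (m+k+1) * Nat.choose (m+k) m := by
    have h := Nat.add_one_mul_choose_eq (m+k) k
    have s1 : Nat.choose (m+k) k = Nat.choose (m+k) m :=
      Nat.choose_symm_of_eq_add (by omega)
    have s2 : Nat.choose (m+k+1) (k+1) = Nat.choose (m+(k+1)) m :=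
      Nat.choose_symm_of_eq_add (by omega)
    rw [s1, s2] at h
    exact (Nat.mul_comm (k+1) _).trans h.symm
  have hC : (k+2-l) * Nat.choose (k+1) (l-1) = (k+1) * Nat.choose k (l-1) := by
    have h := Nat.add_one_mul_choose_eq k (k-(l-1))
    have s1 : Nat.choose k (k-(l-1)) = Nat.choose k (l-1) :=
      Nat.choose_symm_of_eq_add (by omega)
    have s2 : Nat.choose (k+1) (k-(l-1)+1) = Nat.choose (k+1) (l-1) :=
      Nat.choose_symm_of_eq_add (by omega)
    rw [s1, s2] at h
    have heq : k - (l-1) + 1 = k + 2 - l := by omega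
    rw [heq] at h
    exact (Nat.mul_comm (k+2-l) _).trans (by rw [h, Nat.mul_comm])
  have hnR : (n:ℝ) = (m:ℝ) - k := by
    rw [hndef]; push_cast [Nat.cast_sub hk2.le]; ring
  have hn0 : (n:ℝ) ≠ 0 := by positivity
  have hk0 : ((k:ℝ)+1) ≠ 0 := by positivity
  have hkl0 : ((k:ℝ)+2-l) ≠ 0 := by
    have : (l:ℝ) ≤ (k:ℝ)+1 := by exact_mod_cast (by omega : l ≤ k+1)
    intro hcon; linarith [(by linarith : (l:ℝ) = (k:ℝ)+2)]
  have hA' : (Nat.choose (2*n) n : ℝ) = 2*(2*(n:ℝ)-1) * (Nat.choose (2*n-2) (n-1) : ℝ) / n := by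
    rw [eq_div_iff hn0]
    have := congrArg (Nat.cast (R := ℝ)) hA
    push_cast [Nat.cast_sub (by omega : 1 ≤ 2*n)] at this
    linarith
  have hB' : (Nat.choose (m+(k+1)) m : ℝ) = ((m:ℝ)+k+1) * (Nat.choose (m+k) m : ℝ) / ((k:ℝ)+1) := by
    rw [eq_div_iff hk0]
    have := congrArg (Nat.cast (R := ℝ)) hB
    push_cast at this
    linarith
  have hC' : (Nat.choose (k+1) (l-1) : ℝ) = ((k:ℝ)+1) * (Nat.choose k (l-1) : ℝ) / ((k:ℝ)+2-l) := by
    rw [eq_div_iff hkl0]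
    have := congrArg (Nat.cast (R := ℝ)) hC
    push_cast [Nat.cast_sub (by omega : l ≤ k+2)] at this
    linarith
  rw [hA', hB', hC', hnR]
  have hmk : (m:ℝ) - k ≠ 0 := by rw [← hnR]; exact hn0
  field_simp [hmk, hkl0]
  ring

lemma d_pkid (m l k : ℕ) (hl : 1 ≤ l) (hk : l - 1 ≤ k) :
    (l:ℝ)*((l:ℝ)+1)*(Nat.choose k (l+1) : ℝ)
      + ((m:ℝ)*((m:ℝ)+1) - (l:ℝ)*((l:ℝ)-1))*(Nat.choose k (l-1) : ℝ)
      - (l:ℝ)*(2*(m:ℝ)+1)*(Nat.choose k l : ℝ)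
    = (Nat.choose k (l-1) : ℝ) * (((m:ℝ)+l-k)^2 - ((l:ℝ)^2 - l + m + 1)) := by
  rcases Nat.lt_or_ge k l with hkl | hkl
  · have hk' : k = l - 1 := by omega
    subst hk'
    rw [show (l-1).choose (l+1) = 0 from Nat.choose_eq_zero_of_lt (by omega),
      show (l-1).choose l = 0 from Nat.choose_eq_zero_of_lt (by omega), Nat.choose_self]
    rw [Nat.cast_sub hl]
    push_cast
    ring
  · have hl0 : (l:ℝ) ≠ 0 := by
      have : (1:ℝ) ≤ (l:ℝ) := by exact_mod_cast hl
      linarith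
    have hl1 : (l:ℝ) + 1 ≠ 0 := by positivity
    have R1 : (Nat.choose k l : ℝ) * l = (Nat.choose k (l-1) : ℝ) * ((k:ℝ) - l + 1) := by
      have h := Nat.choose_succ_right_eq k (l-1)
      have e : l - 1 + 1 = l := by omega
      rw [e] at h
      have := congrArg (Nat.cast (R := ℝ)) h
      push_cast [Nat.cast_sub (by omega : l - 1 ≤ k), Nat.cast_sub hl] at this
      convert this using 2 <;> push_cast [Nat.cast_sub hl] <;> ring
    have R2 : (Nat.choose k (l+1) : ℝ) * ((l:ℝ)+1) = (Nat.choose k l : ℝ) * ((k:ℝ) - l) := by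
      have h := Nat.choose_succ_right_eq k l
      have := congrArg (Nat.cast (R := ℝ)) h
      push_cast [Nat.cast_sub hkl] at this
      exact_mod_cast this
    have hD1 : (Nat.choose k l : ℝ) = (Nat.choose k (l-1) : ℝ) * ((k:ℝ) - l + 1) / l := by
      rw [eq_div_iff hl0]; exact R1
    have hD2 : (Nat.choose k (l+1) : ℝ) = (Nat.choose k l : ℝ) * ((k:ℝ) - l) / ((l:ℝ)+1) := by
      rw [eq_div_iff hl1]; exact R2
    rw [hD2, hD1]
    field_simp
    ring

noncomputable def dGf (m l k : ℕ) : ℝ :=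
  ((k:ℝ)-l+1) * (2*(m:ℝ)+1-2*(k:ℝ)) * dT m k * (Nat.choose k (l-1) : ℝ)

noncomputable def dFf (m l k : ℕ) : ℝ :=
  dT m k * (Nat.choose k (l-1) : ℝ) * (((m:ℝ)+l-k)^2 - ((l:ℝ)^2 - l + m + 1))

lemma d_tele' (m l k : ℕ) (hl : 1 ≤ l) (hk1 : l - 1 ≤ k) (hk2 : k < m) :
    dFf m l k = dGf m l (k+1) - dGf m l k := by
  unfold dFf dGf
  rw [← d_tele m l k hl hk1 hk2]
  push_cast
  ring

lemma sum_dFf_zero (m l : ℕ) (hl : 1 ≤ l) (hlm : l ≤ m) :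
    ∑ k ∈ Finset.Icc (l-1) m, dFf m l k = 0 := by
  have h1 : l - 1 ≤ m := by omega
  rw [← Finset.Ico_add_one_right_eq_Icc, Finset.sum_Ico_succ_top h1]
  have h2 : ∑ k ∈ Finset.Ico (l-1) m, dFf m l k
      = ∑ k ∈ Finset.Ico (l-1) m, (dGf m l (k+1) - dGf m l k) := by
    apply Finset.sum_congr rfl
    intro k hk
    simp only [Finset.mem_Ico] at hk
    exact d_tele' m l k hl hk.1 hk.2
  rw [h2, Finset.sum_Ico_eq_sub _ h1, Finset.sum_range_sub (dGf m l),
    Finset.sum_range_sub (dGf m l)]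
  have hG0 : dGf m l (l-1) = 0 := by
    unfold dGf
    rw [Nat.cast_sub hl]
    ring
  have hFm : dFf m l m = -dGf m l m := by
    unfold dFf dGf
    ring
  rw [hG0, hFm]
  ring

lemma d_rec3 (m l : ℕ) (hl : 1 ≤ l) (hlm : l + 1 ≤ m) :
    (l:ℝ)*((l:ℝ)+1)*(d m (l+1)) + ((m:ℝ)*((m:ℝ)+1) - (l:ℝ)*((l:ℝ)-1))*(d m (l-1))
      = (l:ℝ)*(2*(m:ℝ)+1)*(d m l) := by
  rw [d_eq, d_eq, d_eq]
  have key : (l:ℝ)*((l:ℝ)+1)*(∑ k ∈ Finset.Icc (l+1) m, dT m k * (Nat.choose k (l+1) : ℝ))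
      + ((m:ℝ)*((m:ℝ)+1) - (l:ℝ)*((l:ℝ)-1))*(∑ k ∈ Finset.Icc (l-1) m, dT m k * (Nat.choose k (l-1) : ℝ))
      - (l:ℝ)*(2*(m:ℝ)+1)*(∑ k ∈ Finset.Icc l m, dT m k * (Nat.choose k l : ℝ)) = 0 := by
    have e1 : ∑ k ∈ Finset.Icc (l+1) m, dT m k * (Nat.choose k (l+1) : ℝ)
        = ∑ k ∈ Finset.Icc (l-1) m, dT m k * (Nat.choose k (l+1) : ℝ) := by
      apply Finset.sum_subset
      · apply Finset.Icc_subset_Icc_left; omega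
      · intro k hk hk2
        simp only [Finset.mem_Icc] at hk hk2
        rw [Nat.choose_eq_zero_of_lt (by omega)]
        simp
    have e2 : ∑ k ∈ Finset.Icc l m, dT m k * (Nat.choose k l : ℝ)
        = ∑ k ∈ Finset.Icc (l-1) m, dT m k * (Nat.choose k l : ℝ) := by
      apply Finset.sum_subset
      · apply Finset.Icc_subset_Icc_left; omega
      · intro k hk hk2
        simp only [Finset.mem_Icc] at hk hk2
        rw [Nat.choose_eq_zero_of_lt (by omega)]
        simp
    rw [e1, e2, Finset.mul_sum, Finset.mul_sum, Finset.mul_sum, ← Finset.sum_add_distrib,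
      ← Finset.sum_sub_distrib]
    rw [show (0:ℝ) = ∑ k ∈ Finset.Icc (l-1) m, dFf m l k from
      (sum_dFf_zero m l hl (by omega)).symm]
    apply Finset.sum_congr rfl
    intro k hk
    simp only [Finset.mem_Icc] at hk
    have := d_pkid m l k hl hk.1
    unfold dFf
    linear_combination dT m k * this
  linear_combination ((2:ℝ)^(2*m))⁻¹ * key

lemma d_prop_step (m l : ℕ) (h2 : l + 2 ≤ m) (hd : d m (l+1) ≤ d m l) :
    d m (l+2) ≤ d m (l+1) := by
  have R := d_rec3 m (l+1) (by omega) (by omega)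
  simp only [Nat.add_sub_cancel] at R
  push_cast at R
  have e : l + 1 + 1 = l + 2 := by omega
  rw [e] at R
  have hd1 : 0 ≤ d m (l+1) := d_nonneg _ _
  have hd0 : 0 ≤ d m l := d_nonneg _ _
  have hpos : (0:ℝ) < ((l:ℝ)+1)*((l:ℝ)+2) := by positivity
  have hlmR : (l:ℝ) + 2 ≤ (m:ℝ) := by exact_mod_cast h2
  rcases le_or_gt m (2*l+2) with hc | hc
  · have hmR : (m:ℝ) ≤ 2*(l:ℝ)+2 := by exact_mod_cast hc
    have RB := ratio_d m l (by omega)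
    have RB2 := mul_le_mul_of_nonneg_left RB (show (0:ℝ) ≤ (m:ℝ)+(l:ℝ)+1 by positivity)
    nlinarith [R, RB2, hd1, hpos, mul_nonneg hd1 (sub_nonneg.mpr hmR)]
  · have hmR : 2*(l:ℝ)+3 ≤ (m:ℝ) := by exact_mod_cast hc
    have hcoef : (0:ℝ) ≤ (m:ℝ)*((m:ℝ)+1) - ((l:ℝ)+1)*(l:ℝ) := by nlinarith
    have h1 := mul_le_mul_of_nonneg_left hd hcoef
    have hq : (0:ℝ) ≤ (m:ℝ)^2 - m + 1 - (l:ℝ)*(2*(m:ℝ)-1) := by nlinarith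
    nlinarith [R, h1, hd1, hpos, mul_nonneg hd1 hq]

/-- For every positive integer `m`, the sequence `{d ℓ (m)}_{ℓ=0}^{m}` is unimodal. -/
theorem d_unimodal (m : ℕ) (hm : 1 ≤ m) :
    ∃ j ≤ m, (∀ a b : ℕ, a ≤ b → b ≤ j → d m a ≤ d m b) ∧
      (∀ a b : ℕ, j ≤ a → a ≤ b → b ≤ m → d m b ≤ d m a) := by
  classical
  by_cases h : ∃ l, l < m ∧ d m (l+1) ≤ d m l
  · set j := Nat.find h with hjdef
    have hj := Nat.find_spec h
    have hjm : j ≤ m := hj.1.le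
    have dec : ∀ l, j ≤ l → l < m → d m (l+1) ≤ d m l := by
      intro l hl
      induction l, hl using Nat.le_induction with
      | base => intro _; exact hj.2
      | succ n hn ih =>
        intro hnm
        have e : n + 1 + 1 = n + 2 := by omega
        rw [e]
        exact d_prop_step m n (by omega) (ih (by omega))
    have inc : ∀ l, l < j → d m l ≤ d m (l+1) := by
      intro l hl
      have hmin := Nat.find_min h hl
      push_neg at hmin
      exact (hmin (by omega : l < m)).le
    refine ⟨j, hjm, ?_, ?_⟩
    · intro a b hab hbj
      induction b, hab using Nat.le_induction with
      | base => exact le_refl _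
      | succ n hn ih => exact le_trans (ih (by omega)) (inc n (by omega))
    · intro a b hja hab hbm
      induction b, hab using Nat.le_induction with
      | base => exact le_refl _
      | succ n hn ih =>
        exact le_trans (dec n (le_trans hja hn) (by omega)) (ih (by omega))
  · push_neg at h
    refine ⟨m, le_refl m, ?_, ?_⟩
    · intro a b hab hbm
      induction b, hab using Nat.le_induction with
      | base => exact le_refl _
      | succ n hn ih => exact le_trans (ih (by omega)) (h n (by omega)).le
    · intro a b hma hab hbm
      have ha : a = m := le_antisymm (le_trans hab hbm) hma
      have hb : b = m := le_antisymm hbm (le_trans hma hab)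
      rw [ha, hb]
end

section
/- For every positive integer m and every integer 0 ≤ ℓ ≤ m-1, the difference Δd_ℓ(m) = d_{ℓ+1}(m) − d_ℓ(m) satisfies Δd_ℓ(m) = 2^{-2m} · C(m+ℓ, m) · Σ_{k=ℓ}^{m} 2^k · C(2m-2k, m-k) · C(m+k, m+ℓ) · (k − 2ℓ − 1)/(ℓ+1). -/
lemma term_identity (m ℓ k : ℕ) (hk : ℓ ≤ k) :
    (Nat.choose (m + k) m : ℝ) * (Nat.choose k (ℓ + 1) : ℝ) -
      (Nat.choose (m + k) m : ℝ) * (Nat.choose k ℓ : ℝ) =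
    (Nat.choose (m + ℓ) m : ℝ) * ((Nat.choose (m + k) (m + ℓ) : ℝ) *
      (((k : ℝ) - 2 * ℓ - 1) / (ℓ + 1))) := by
  have h1 : Nat.choose k (ℓ + 1) * (ℓ + 1) = Nat.choose k ℓ * (k - ℓ) :=
    Nat.choose_succ_right_eq k ℓ
  have h2 : (m + k).choose (m + ℓ) * (m + ℓ).choose m =
      (m + k).choose m * (m + k - m).choose (m + ℓ - m) :=
    Nat.choose_mul (by omega)
  simp only [Nat.add_sub_cancel_left] at h2
  have h1' : (Nat.choose k (ℓ + 1) : ℝ) * ((ℓ : ℝ) + 1) =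
      (Nat.choose k ℓ : ℝ) * ((k : ℝ) - ℓ) := by
    have h := congrArg (fun x : ℕ => (x : ℝ)) h1
    push_cast [hk] at h
    linarith
  have h2' : ((m + k).choose (m + ℓ) : ℝ) * ((m + ℓ).choose m : ℝ) =
      ((m + k).choose m : ℝ) * (k.choose ℓ : ℝ) := by exact_mod_cast h2
  have hpos : ((ℓ : ℝ) + 1) ≠ 0 := by positivity
  field_simp
  nlinarith [h1', h2']

/-- The difference `Δd_ℓ(m) = d_{ℓ+1}(m) − d_ℓ(m)` equals
`2^{-2m} C(m+ℓ, m) ∑_{k=ℓ}^{m} 2^k C(2m-2k, m-k) C(m+k, m+ℓ) (k − 2ℓ − 1)/(ℓ+1)`. -/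
theorem delta_d_formula (m ℓ : ℕ) (hm : 1 ≤ m) (hℓ : ℓ ≤ m - 1) :
    d m (ℓ + 1) - d m ℓ =
      ((2 : ℝ) ^ (2 * m))⁻¹ * (Nat.choose (m + ℓ) m : ℝ) *
        ∑ k ∈ Finset.Icc ℓ m,
          (2 : ℝ) ^ k * (Nat.choose (2 * m - 2 * k) (m - k) : ℝ) *
            (Nat.choose (m + k) (m + ℓ) : ℝ) * (((k : ℝ) - 2 * ℓ - 1) / (ℓ + 1)) := by
  have hlm : ℓ ≤ m := by omega
  -- extend the sum in d m (ℓ+1) down to ℓ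
  have hext : d m (ℓ + 1) = ((2 : ℝ) ^ (2 * m))⁻¹ *
      ∑ k ∈ Finset.Icc ℓ m,
        (2 : ℝ) ^ k * (Nat.choose (2 * m - 2 * k) (m - k) : ℝ) *
          (Nat.choose (m + k) m : ℝ) * (Nat.choose k (ℓ + 1) : ℝ) := by
    unfold d
    congr 1
    rw [Finset.Icc_add_one_left_eq_Ioc, ← Finset.sum_Ioc_add_eq_sum_Icc hlm]
    simp
  rw [hext]
  unfold d
  rw [← mul_sub, ← Finset.sum_sub_distrib, mul_assoc]
  congr 1
  rw [Finset.mul_sum]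
  refine Finset.sum_congr rfl fun k hk => ?_
  have hkℓ : ℓ ≤ k := (Finset.mem_Icc.mp hk).1
  have := term_identity m ℓ k hkℓ
  set A := (2 : ℝ) ^ k * (Nat.choose (2 * m - 2 * k) (m - k) : ℝ)
  calc A * (Nat.choose (m + k) m : ℝ) * (Nat.choose k (ℓ + 1) : ℝ) -
        A * (Nat.choose (m + k) m : ℝ) * (Nat.choose k ℓ : ℝ)
      = A * ((Nat.choose (m + k) m : ℝ) * (Nat.choose k (ℓ + 1) : ℝ) -
          (Nat.choose (m + k) m : ℝ) * (Nat.choose k ℓ : ℝ)) := by ring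
    _ = A * ((Nat.choose (m + ℓ) m : ℝ) * ((Nat.choose (m + k) (m + ℓ) : ℝ) *
          (((k : ℝ) - 2 * ℓ - 1) / (ℓ + 1)))) := by rw [this]
    _ = (Nat.choose (m + ℓ) m : ℝ) *
          (A * (Nat.choose (m + k) (m + ℓ) : ℝ) * (((k : ℝ) - 2 * ℓ - 1) / (ℓ + 1))) := by
        ring
end

section
/- For every positive integer m and every integer ℓ with ⌊m/2⌋ ≤ ℓ ≤ m−1, one has d_{ℓ+1}(m) − d_ℓ(m) < 0. -/
/-- For `⌊m/2⌋ ≤ ℓ ≤ m − 1`, one has `d_{ℓ+1}(m) − d_ℓ(m) < 0`. -/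
theorem delta_d_neg (m ℓ : ℕ) (hm : 1 ≤ m) (hℓ : m / 2 ≤ ℓ) (hℓ' : ℓ ≤ m - 1) :
    d m (ℓ + 1) - d m ℓ < 0 := by
  have hℓm : ℓ + 1 ≤ m := by omega
  have hnot : ℓ ∉ Finset.Icc (ℓ + 1) m := by simp
  have hsplit : Finset.Icc ℓ m = insert ℓ (Finset.Icc (ℓ + 1) m) := by
    ext x; simp only [Finset.mem_Icc, Finset.mem_insert]; omega
  have hsum : ∑ k ∈ Finset.Icc (ℓ + 1) m,
        (2 : ℝ) ^ k * (Nat.choose (2 * m - 2 * k) (m - k) : ℝ) *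
          (Nat.choose (m + k) m : ℝ) * (Nat.choose k (ℓ + 1) : ℝ)
      < ∑ k ∈ Finset.Icc ℓ m,
        (2 : ℝ) ^ k * (Nat.choose (2 * m - 2 * k) (m - k) : ℝ) *
          (Nat.choose (m + k) m : ℝ) * (Nat.choose k ℓ : ℝ) := by
    rw [hsplit, Finset.sum_insert hnot]
    have hpos : (0 : ℝ) < (2 : ℝ) ^ ℓ * (Nat.choose (2 * m - 2 * ℓ) (m - ℓ) : ℝ) *
        (Nat.choose (m + ℓ) m : ℝ) * (Nat.choose ℓ ℓ : ℝ) := by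
      have h1 : 0 < Nat.choose (2 * m - 2 * ℓ) (m - ℓ) :=
        Nat.choose_pos (by omega)
      have h2 : 0 < Nat.choose (m + ℓ) m := Nat.choose_pos (by omega)
      have h1' : (0:ℝ) < (Nat.choose (2 * m - 2 * ℓ) (m - ℓ) : ℝ) := by exact_mod_cast h1
      have h2' : (0:ℝ) < (Nat.choose (m + ℓ) m : ℝ) := by exact_mod_cast h2
      have h3' : (0:ℝ) < (Nat.choose ℓ ℓ : ℝ) := by simp
      exact mul_pos (mul_pos (mul_pos (by positivity) h1') h2') h3'
    have hmono : ∑ k ∈ Finset.Icc (ℓ + 1) m,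
        (2 : ℝ) ^ k * (Nat.choose (2 * m - 2 * k) (m - k) : ℝ) *
          (Nat.choose (m + k) m : ℝ) * (Nat.choose k (ℓ + 1) : ℝ)
        ≤ ∑ k ∈ Finset.Icc (ℓ + 1) m,
        (2 : ℝ) ^ k * (Nat.choose (2 * m - 2 * k) (m - k) : ℝ) *
          (Nat.choose (m + k) m : ℝ) * (Nat.choose k ℓ : ℝ) := by
      apply Finset.sum_le_sum
      intro k hk
      simp only [Finset.mem_Icc] at hk
      have hch : Nat.choose k (ℓ + 1) ≤ Nat.choose k ℓ := by
        have h := Nat.add_one_mul_choose_eq k ℓ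
        have h2 : Nat.choose k (ℓ + 1) * (ℓ + 1) = Nat.choose k ℓ * (k - ℓ) :=
          Nat.choose_succ_right_eq k ℓ
        have hk2 : k - ℓ ≤ ℓ + 1 := by omega
        have : Nat.choose k (ℓ + 1) * (ℓ + 1) ≤ Nat.choose k ℓ * (ℓ + 1) := by
          rw [h2]; exact Nat.mul_le_mul_left _ hk2
        exact Nat.le_of_mul_le_mul_right this (by omega)
      have hnn : (0 : ℝ) ≤ (2 : ℝ) ^ k * (Nat.choose (2 * m - 2 * k) (m - k) : ℝ) *
          (Nat.choose (m + k) m : ℝ) := by positivity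
      exact mul_le_mul_of_nonneg_left (by exact_mod_cast hch) hnn
    linarith
  have hc : (0 : ℝ) < ((2 : ℝ) ^ (2 * m))⁻¹ := by positivity
  unfold d
  nlinarith [mul_lt_mul_of_pos_left hsum hc]
end

section
/- For every positive integer m and every integer ℓ with 0 ≤ ℓ < ⌊m/2⌋, one has d_{ℓ+1}(m) − d_ℓ(m) > 0; equivalently, Σ_{k=ℓ}^{2ℓ} 2^k (2ℓ+1−k) C(2m−2k, m−k) C(m+k, m+ℓ) < Σ_{k=2ℓ+2}^{m} 2^k (k−2ℓ−1) C(2m−2k, m−k) C(m+k, m+ℓ). -/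
open Finset

/-- auxiliary summand -/
private def aa (m ℓ k : ℕ) : ℕ :=
  2 ^ k * Nat.choose (2 * m - 2 * k) (m - k) * Nat.choose (m + k) (m + ℓ)

private lemma aa_pos {m ℓ k : ℕ} (hk : ℓ ≤ k) (hkm : k ≤ m) : 0 < aa m ℓ k := by
  have h1 : 0 < Nat.choose (2 * m - 2 * k) (m - k) := Nat.choose_pos (by omega)
  have h2 : 0 < Nat.choose (m + k) (m + ℓ) := Nat.choose_pos (by omega)
  have h3 : 0 < 2 ^ k := pow_pos (by norm_num) k
  exact Nat.mul_pos (Nat.mul_pos h3 h1) h2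

private lemma aa_ratio (m ℓ k : ℕ) (hk : ℓ ≤ k) (hkm : k < m) :
    aa m ℓ (k + 1) * ((2 * (m - k) - 1) * (k + 1 - ℓ)) =
      aa m ℓ k * ((m - k) * (m + k + 1)) := by
  obtain ⟨t, rfl⟩ : ∃ t, m = k + 1 + t := ⟨m - k - 1, by omega⟩
  obtain ⟨s, rfl⟩ : ∃ s, k = ℓ + s := ⟨k - ℓ, by omega⟩
  set k := ℓ + s with hkdef
  set m := k + 1 + t with hmdef
  have e1 : 2 * m - 2 * (k + 1) = 2 * t := by omega
  have e2 : m - (k + 1) = t := by omega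
  have e3 : 2 * m - 2 * k = 2 * t + 2 := by omega
  have e4 : m - k = t + 1 := by omega
  have e5 : 2 * (m - k) - 1 = 2 * t + 1 := by omega
  have e6 : k + 1 - ℓ = s + 1 := by omega
  rw [aa, aa, e1, e2, e5, e3, e4, e6]
  -- key choose identities
  have h1 : Nat.choose (m + (k + 1)) (m + ℓ) * (s + 1) =
      (m + k + 1) * Nat.choose (m + k) (m + ℓ) := by
    have hs := Nat.add_one_mul_choose_eq (m + k) (m + ℓ)
    have hr := Nat.choose_succ_right_eq (m + k + 1) (m + ℓ)
    have hsub : m + k + 1 - (m + ℓ) = s + 1 := by omega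
    rw [hsub] at hr
    have he : m + (k + 1) = m + k + 1 := by omega
    rw [he]
    exact hr.symm.trans hs.symm
  have h2 : (t + 1) * Nat.choose (2 * t + 2) (t + 1) =
      2 * (2 * t + 1) * Nat.choose (2 * t) t := by
    have := Nat.succ_mul_centralBinom_succ t
    simpa [Nat.centralBinom, Nat.mul_succ] using this
  apply @Nat.cast_injective ℤ
  push_cast
  have h1' : (Nat.choose (m + (k + 1)) (m + ℓ) : ℤ) * (s + 1) =
      (m + k + 1 : ℤ) * Nat.choose (m + k) (m + ℓ) := by exact_mod_cast h1
  have h2' : ((t : ℤ) + 1) * Nat.choose (2 * t + 2) (t + 1) =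
      2 * (2 * t + 1) * Nat.choose (2 * t) t := by exact_mod_cast h2
  linear_combination (2 : ℤ) ^ (k + 1) * (2 * t + 1) * (Nat.choose (2 * t) t : ℤ) * h1' -
    2 ^ k * ((m : ℤ) + k + 1) * (Nat.choose (m + k) (m + ℓ) : ℤ) * h2'

private lemma aa_lt (m ℓ k : ℕ) (hk : ℓ ≤ k) (hkm : k < m) :
    aa m ℓ k < aa m ℓ (k + 1) := by
  have hr := aa_ratio m ℓ k hk hkm
  have hApos : 0 < (2 * (m - k) - 1) * (k + 1 - ℓ) := by
    apply Nat.mul_pos <;> omega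
  have hAB : (2 * (m - k) - 1) * (k + 1 - ℓ) < (m - k) * (m + k + 1) := by
    obtain ⟨t, rfl⟩ : ∃ t, m = k + 1 + t := ⟨m - k - 1, by omega⟩
    obtain ⟨s, rfl⟩ : ∃ s, k = ℓ + s := ⟨k - ℓ, by omega⟩
    have e5 : 2 * (ℓ + s + 1 + t - (ℓ + s)) - 1 = 2 * t + 1 := by omega
    have e6 : ℓ + s + 1 - ℓ = s + 1 := by omega
    have e4 : ℓ + s + 1 + t - (ℓ + s) = t + 1 := by omega
    rw [e5, e6, e4]
    nlinarith [Nat.zero_le t, Nat.zero_le s, Nat.zero_le ℓ]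
  have hpos : 0 < aa m ℓ k := aa_pos hk (le_of_lt hkm)
  have h1 : aa m ℓ k * ((2 * (m - k) - 1) * (k + 1 - ℓ)) <
      aa m ℓ (k + 1) * ((2 * (m - k) - 1) * (k + 1 - ℓ)) := by
    rw [hr]
    exact mul_lt_mul_of_pos_left hAB hpos
  exact Nat.lt_of_mul_lt_mul_right h1

private lemma aa_two (m ℓ k : ℕ) (hℓ1 : 1 ≤ ℓ) (hk : ℓ ≤ k) (hk2 : k + 1 ≤ 2 * ℓ + 2)
    (hkm : k < m) : 2 * aa m ℓ k ≤ aa m ℓ (k + 1) := by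
  have hr := aa_ratio m ℓ k hk hkm
  have hApos : 0 < (2 * (m - k) - 1) * (k + 1 - ℓ) := by
    apply Nat.mul_pos <;> omega
  have hAB : 2 * ((2 * (m - k) - 1) * (k + 1 - ℓ)) ≤ (m - k) * (m + k + 1) := by
    obtain ⟨t, rfl⟩ : ∃ t, m = k + 1 + t := ⟨m - k - 1, by omega⟩
    obtain ⟨s, rfl⟩ : ∃ s, k = ℓ + s := ⟨k - ℓ, by omega⟩
    have hs : s ≤ ℓ + 1 := by omega
    have e5 : 2 * (ℓ + s + 1 + t - (ℓ + s)) - 1 = 2 * t + 1 := by omega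
    have e6 : ℓ + s + 1 - ℓ = s + 1 := by omega
    have e4 : ℓ + s + 1 + t - (ℓ + s) = t + 1 := by omega
    rw [e5, e6, e4]
    rcases t with _ | _ | t
    · nlinarith
    · nlinarith
    · nlinarith
  have h1 : (2 * aa m ℓ k) * ((2 * (m - k) - 1) * (k + 1 - ℓ)) ≤
      aa m ℓ (k + 1) * ((2 * (m - k) - 1) * (k + 1 - ℓ)) := by
    rw [hr]
    calc (2 * aa m ℓ k) * ((2 * (m - k) - 1) * (k + 1 - ℓ)) =
        aa m ℓ k * (2 * ((2 * (m - k) - 1) * (k + 1 - ℓ))) := by ring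
      _ ≤ aa m ℓ k * ((m - k) * (m + k + 1)) := Nat.mul_le_mul_left _ hAB
  exact Nat.le_of_mul_le_mul_right h1 hApos

private lemma aa_geom (m ℓ : ℕ) (hℓ1 : 1 ≤ ℓ) (hm : 2 * ℓ + 2 ≤ m) :
    ∀ j k, ℓ ≤ k → k + j ≤ 2 * ℓ + 2 → 2 ^ j * aa m ℓ k ≤ aa m ℓ (k + j) := by
  intro j
  induction j with
  | zero => intro k _ _; simp
  | succ n ih =>
    intro k hk hkj
    have h1 := ih k hk (by omega)
    have h2 := aa_two m ℓ (k + n) hℓ1 (by omega) (by omega) (by omega)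
    calc 2 ^ (n + 1) * aa m ℓ k = 2 * (2 ^ n * aa m ℓ k) := by ring
      _ ≤ 2 * aa m ℓ (k + n) := Nat.mul_le_mul_left _ h1
      _ ≤ aa m ℓ (k + n + 1) := h2
      _ = aa m ℓ (k + (n + 1)) := by ring_nf

private lemma pow_sum_aux : ∀ n : ℕ, (∑ j ∈ Finset.range n, 2 ^ j) + 1 = 2 ^ n := by
  intro n
  induction n with
  | zero => simp
  | succ n ih => rw [Finset.sum_range_succ]; rw [pow_succ]; omega

private lemma geom_sum_lt_aux (n : ℕ) :
    ∑ j ∈ Finset.range (n + 1), (n + 1 - j) * 2 ^ j < 2 ^ (n + 2) := by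
  induction n with
  | zero => norm_num
  | succ n ih =>
    show ∑ j ∈ Finset.range (n + 2), (n + 2 - j) * 2 ^ j < 2 ^ (n + 3)
    have hstep : ∑ j ∈ Finset.range (n + 2), (n + 2 - j) * 2 ^ j =
        (∑ j ∈ Finset.range (n + 1), (n + 1 - j) * 2 ^ j) +
          ∑ j ∈ Finset.range (n + 2), 2 ^ j := by
      have h1 : ∑ j ∈ Finset.range (n + 2), (n + 2 - j) * 2 ^ j =
          ∑ j ∈ Finset.range (n + 2), ((n + 1 - j) * 2 ^ j + 2 ^ j) := by
        apply Finset.sum_congr rfl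
        intro j hj
        have hj' : j ≤ n + 1 := by simpa [Nat.lt_succ_iff] using Finset.mem_range.mp hj
        have : n + 2 - j = (n + 1 - j) + 1 := by omega
        rw [this, add_mul, one_mul]
      rw [h1, Finset.sum_add_distrib]
      congr 1
      rw [Finset.sum_range_succ]
      simp
    have hg := pow_sum_aux (n + 2)
    have hp : (2 : ℕ) ^ (n + 3) = 2 * 2 ^ (n + 2) := by rw [pow_succ]; ring
    omega

/-- the key natural-number inequality -/
private lemma nat_ineq (m ℓ : ℕ) (hm2 : 2 * ℓ + 2 ≤ m) :
    ∑ k ∈ Finset.Icc ℓ (2 * ℓ),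
        2 ^ k * (2 * ℓ + 1 - k) * Nat.choose (2 * m - 2 * k) (m - k) *
          Nat.choose (m + k) (m + ℓ) <
      ∑ k ∈ Finset.Icc (2 * ℓ + 2) m,
        2 ^ k * (k - (2 * ℓ + 1)) * Nat.choose (2 * m - 2 * k) (m - k) *
          Nat.choose (m + k) (m + ℓ) := by
  have hL : ∑ k ∈ Finset.Icc ℓ (2 * ℓ),
      2 ^ k * (2 * ℓ + 1 - k) * Nat.choose (2 * m - 2 * k) (m - k) *
        Nat.choose (m + k) (m + ℓ) =
      ∑ k ∈ Finset.Icc ℓ (2 * ℓ), (2 * ℓ + 1 - k) * aa m ℓ k := by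
    apply Finset.sum_congr rfl; intro k _; rw [aa]; ring
  have hR : ∑ k ∈ Finset.Icc (2 * ℓ + 2) m,
      2 ^ k * (k - (2 * ℓ + 1)) * Nat.choose (2 * m - 2 * k) (m - k) *
        Nat.choose (m + k) (m + ℓ) =
      ∑ k ∈ Finset.Icc (2 * ℓ + 2) m, (k - (2 * ℓ + 1)) * aa m ℓ k := by
    apply Finset.sum_congr rfl; intro k _; rw [aa]; ring
  rw [hL, hR]
  have hRP : aa m ℓ (2 * ℓ + 2) ≤
      ∑ k ∈ Finset.Icc (2 * ℓ + 2) m, (k - (2 * ℓ + 1)) * aa m ℓ k := by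
    have hmem : 2 * ℓ + 2 ∈ Finset.Icc (2 * ℓ + 2) m := by
      simp [Finset.mem_Icc]; omega
    have := Finset.single_le_sum (f := fun k => (k - (2 * ℓ + 1)) * aa m ℓ k)
      (fun i _ => Nat.zero_le _) hmem
    simpa using this
  refine lt_of_lt_of_le ?_ hRP
  -- show LHS < aa m ℓ (2ℓ+2)
  rcases Nat.eq_zero_or_pos ℓ with hℓ0 | hℓ1
  · subst hℓ0
    simp only [Nat.mul_zero, Finset.Icc_self, Finset.sum_singleton]
    have h01 := aa_lt m 0 0 (le_refl 0) (by omega)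
    have h12 := aa_lt m 0 1 (by omega) (by omega)
    simpa using lt_trans h01 h12
  · -- ℓ ≥ 1 : use the ratio-2 bound
    have hmain : 2 ^ (ℓ + 2) * (∑ k ∈ Finset.Icc ℓ (2 * ℓ), (2 * ℓ + 1 - k) * aa m ℓ k) <
        2 ^ (ℓ + 2) * aa m ℓ (2 * ℓ + 2) := by
      have hterm : ∀ k ∈ Finset.Icc ℓ (2 * ℓ),
          2 ^ (ℓ + 2) * ((2 * ℓ + 1 - k) * aa m ℓ k) ≤
            ((2 * ℓ + 1 - k) * 2 ^ (k - ℓ)) * aa m ℓ (2 * ℓ + 2) := by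
        intro k hk
        rw [Finset.mem_Icc] at hk
        have hgeom := aa_geom m ℓ hℓ1 hm2 (2 * ℓ + 2 - k) k hk.1 (by omega)
        have hke : k + (2 * ℓ + 2 - k) = 2 * ℓ + 2 := by omega
        rw [hke] at hgeom
        have hpow : 2 ^ (ℓ + 2) = 2 ^ (k - ℓ) * 2 ^ (2 * ℓ + 2 - k) := by
          rw [← pow_add]; congr 1; omega
        calc 2 ^ (ℓ + 2) * ((2 * ℓ + 1 - k) * aa m ℓ k) =
            ((2 * ℓ + 1 - k) * 2 ^ (k - ℓ)) * (2 ^ (2 * ℓ + 2 - k) * aa m ℓ k) := by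
              rw [hpow]; ring
          _ ≤ ((2 * ℓ + 1 - k) * 2 ^ (k - ℓ)) * aa m ℓ (2 * ℓ + 2) :=
              Nat.mul_le_mul_left _ hgeom
      calc 2 ^ (ℓ + 2) * (∑ k ∈ Finset.Icc ℓ (2 * ℓ), (2 * ℓ + 1 - k) * aa m ℓ k) =
          ∑ k ∈ Finset.Icc ℓ (2 * ℓ), 2 ^ (ℓ + 2) * ((2 * ℓ + 1 - k) * aa m ℓ k) := by
            rw [Finset.mul_sum]
        _ ≤ ∑ k ∈ Finset.Icc ℓ (2 * ℓ), ((2 * ℓ + 1 - k) * 2 ^ (k - ℓ)) * aa m ℓ (2 * ℓ + 2) :=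
            Finset.sum_le_sum hterm
        _ = (∑ k ∈ Finset.Icc ℓ (2 * ℓ), (2 * ℓ + 1 - k) * 2 ^ (k - ℓ)) * aa m ℓ (2 * ℓ + 2) := by
            rw [Finset.sum_mul]
        _ < 2 ^ (ℓ + 2) * aa m ℓ (2 * ℓ + 2) := by
            apply Nat.mul_lt_mul_of_lt_of_le _ (le_refl _) (aa_pos (by omega) (by omega))
            -- reindex the sum
            have hre : ∑ k ∈ Finset.Icc ℓ (2 * ℓ), (2 * ℓ + 1 - k) * 2 ^ (k - ℓ) =
                ∑ j ∈ Finset.range (ℓ + 1), (ℓ + 1 - j) * 2 ^ j := by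
              rw [← Finset.Ico_add_one_right_eq_Icc, Finset.sum_Ico_eq_sum_range]
              apply Finset.sum_congr (by congr 1; omega)
              intro j hj
              rw [Finset.mem_range] at hj
              congr 1
              · omega
              · congr 1; omega
            rw [hre]
            exact geom_sum_lt_aux ℓ
    have hpowpos : 0 < 2 ^ (ℓ + 2) := pow_pos (by norm_num) _
    exact Nat.lt_of_mul_lt_mul_left hmain

private lemma chch (m ℓ k : ℕ) (h : ℓ ≤ k) :
    Nat.choose (m + k) m * Nat.choose k ℓ =
      Nat.choose (m + ℓ) ℓ * Nat.choose (m + k) (m + ℓ) := by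
  have h1 : Nat.choose (m + k) m = Nat.choose (m + k) k := Nat.choose_symm_add
  have h2 : Nat.choose (m + k) k * Nat.choose k ℓ =
      Nat.choose (m + k) ℓ * Nat.choose (m + k - ℓ) (k - ℓ) :=
    Nat.choose_mul h
  have h3 : Nat.choose (m + k) (m + ℓ) * Nat.choose (m + ℓ) ℓ =
      Nat.choose (m + k) ℓ * Nat.choose (m + k - ℓ) (m + ℓ - ℓ) :=
    Nat.choose_mul (by omega)
  have h4 : m + ℓ - ℓ = m := by omega
  have h5 : Nat.choose (m + k - ℓ) (k - ℓ) = Nat.choose (m + k - ℓ) m := by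
    have : m + k - ℓ = m + (k - ℓ) := by omega
    rw [this, Nat.choose_symm_add]
  rw [h4] at h3
  rw [h1, h2, h5, ← h3]
  ring


private lemma dpos (m ℓ : ℕ) (hm2 : 2 * ℓ + 2 ≤ m) : 0 < d m (ℓ + 1) - d m ℓ := by
  have hnat := nat_ineq m ℓ hm2
  have h2m : (0 : ℝ) < 2 ^ (2 * m) := by positivity
  set W : ℕ → ℝ := fun k => 2 ^ k * (Nat.choose (2 * m - 2 * k) (m - k) : ℝ) *
      (Nat.choose (m + k) (m + ℓ) : ℝ) * ((k : ℝ) - (2 * ℓ + 1)) with hW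
  set N := ∑ k ∈ Finset.Icc ℓ (2 * ℓ),
      2 ^ k * (2 * ℓ + 1 - k) * Nat.choose (2 * m - 2 * k) (m - k) *
        Nat.choose (m + k) (m + ℓ) with hN
  set P := ∑ k ∈ Finset.Icc (2 * ℓ + 2) m,
      2 ^ k * (k - (2 * ℓ + 1)) * Nat.choose (2 * m - 2 * k) (m - k) *
        Nat.choose (m + k) (m + ℓ) with hP
  have key : ((ℓ : ℝ) + 1) * (2 ^ (2 * m) * (d m (ℓ + 1) - d m ℓ)) =
      (Nat.choose (m + ℓ) ℓ : ℝ) * (∑ k ∈ Finset.Icc ℓ m, W k) := by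
    simp only [d]
    rw [mul_sub, ← mul_assoc, ← mul_assoc, mul_inv_cancel₀ (ne_of_gt h2m), one_mul, one_mul]
    have hins : Finset.Icc ℓ m = insert ℓ (Finset.Icc (ℓ + 1) m) := by
      ext x; simp only [Finset.mem_Icc, Finset.mem_insert]; omega
    have hS1 : (∑ k ∈ Finset.Icc (ℓ + 1) m,
        (2 : ℝ) ^ k * (Nat.choose (2 * m - 2 * k) (m - k) : ℝ) *
          (Nat.choose (m + k) m : ℝ) * (Nat.choose k (ℓ + 1) : ℝ)) =
        ∑ k ∈ Finset.Icc ℓ m,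
        (2 : ℝ) ^ k * (Nat.choose (2 * m - 2 * k) (m - k) : ℝ) *
          (Nat.choose (m + k) m : ℝ) * (Nat.choose k (ℓ + 1) : ℝ) := by
      rw [hins, Finset.sum_insert (by simp [Finset.mem_Icc])]
      simp [Nat.choose_succ_self]
    rw [hS1, ← Finset.sum_sub_distrib, Finset.mul_sum, Finset.mul_sum]
    apply Finset.sum_congr rfl
    intro k hk
    rw [Finset.mem_Icc] at hk
    have f1 : (Nat.choose k (ℓ + 1) : ℝ) * ((ℓ : ℝ) + 1) =
        (Nat.choose k ℓ : ℝ) * ((k : ℝ) - ℓ) := by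
      have h := Nat.choose_succ_right_eq k ℓ
      have hc : ((k - ℓ : ℕ) : ℝ) = (k : ℝ) - ℓ := by
        rw [Nat.cast_sub hk.1]
      calc (Nat.choose k (ℓ + 1) : ℝ) * ((ℓ : ℝ) + 1)
          = ((Nat.choose k (ℓ + 1) * (ℓ + 1) : ℕ) : ℝ) := by push_cast; ring
        _ = ((Nat.choose k ℓ * (k - ℓ) : ℕ) : ℝ) := by rw [h]
        _ = (Nat.choose k ℓ : ℝ) * ((k : ℝ) - ℓ) := by push_cast [hc]; ring
    have f2 : (Nat.choose (m + k) m : ℝ) * (Nat.choose k ℓ : ℝ) =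
        (Nat.choose (m + ℓ) ℓ : ℝ) * (Nat.choose (m + k) (m + ℓ) : ℝ) := by
      exact_mod_cast congrArg (fun x : ℕ => (x : ℝ)) (chch m ℓ k hk.1)
    simp only [hW]
    push_cast
    linear_combination ((2 : ℝ) ^ k * (Nat.choose (2 * m - 2 * k) (m - k) : ℝ)) *
        (Nat.choose (m + k) m : ℝ) * f1 +
      ((2 : ℝ) ^ k * (Nat.choose (2 * m - 2 * k) (m - k) : ℝ) *
        ((k : ℝ) - (2 * ℓ + 1))) * f2
  have hsplitW : ∑ k ∈ Finset.Icc ℓ m, W k = (P : ℝ) - (N : ℝ) := by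
    have hun : Finset.Icc ℓ m = Finset.Icc ℓ (2 * ℓ + 1) ∪ Finset.Icc (2 * ℓ + 2) m := by
      ext x; simp only [Finset.mem_Icc, Finset.mem_union]; omega
    have hdisj : Disjoint (Finset.Icc ℓ (2 * ℓ + 1)) (Finset.Icc (2 * ℓ + 2) m) := by
      simp only [Finset.disjoint_left, Finset.mem_Icc]
      intro x hx hx2; omega
    rw [hun, Finset.sum_union hdisj]
    have hneg : ∑ k ∈ Finset.Icc ℓ (2 * ℓ + 1), W k = -(N : ℝ) := by
      have hins2 : Finset.Icc ℓ (2 * ℓ + 1) = insert (2 * ℓ + 1) (Finset.Icc ℓ (2 * ℓ)) := by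
        ext x; simp only [Finset.mem_Icc, Finset.mem_insert]; omega
      rw [hins2, Finset.sum_insert (by simp [Finset.mem_Icc])]
      have hW0 : W (2 * ℓ + 1) = 0 := by simp only [hW]; push_cast; ring
      rw [hW0, zero_add, hN]
      push_cast
      rw [← Finset.sum_neg_distrib]
      apply Finset.sum_congr rfl
      intro k hk
      rw [Finset.mem_Icc] at hk
      have hc : ((2 * ℓ + 1 - k : ℕ) : ℝ) = 2 * (ℓ : ℝ) + 1 - (k : ℝ) := by
        rw [Nat.cast_sub (by omega : k ≤ 2 * ℓ + 1)]; push_cast; ring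
      simp only [hW]
      rw [hc]
      ring
    have hpos : ∑ k ∈ Finset.Icc (2 * ℓ + 2) m, W k = (P : ℝ) := by
      rw [hP]
      push_cast
      apply Finset.sum_congr rfl
      intro k hk
      rw [Finset.mem_Icc] at hk
      have hc : ((k - (2 * ℓ + 1) : ℕ) : ℝ) = (k : ℝ) - (2 * (ℓ : ℝ) + 1) := by
        rw [Nat.cast_sub (by omega : 2 * ℓ + 1 ≤ k)]; push_cast; ring
      simp only [hW]
      rw [hc]
      ring
    rw [hneg, hpos]; ring
  have hPN : (0 : ℝ) < (P : ℝ) - (N : ℝ) := by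
    have : (N : ℝ) < (P : ℝ) := by exact_mod_cast hnat
    linarith
  have hC : (0 : ℝ) < (Nat.choose (m + ℓ) ℓ : ℝ) := by
    exact_mod_cast Nat.choose_pos (by omega : ℓ ≤ m + ℓ)
  have h1 : (0 : ℝ) < ((ℓ : ℝ) + 1) * (2 ^ (2 * m) * (d m (ℓ + 1) - d m ℓ)) := by
    rw [key, hsplitW]
    exact mul_pos hC hPN
  have hℓpos : (0 : ℝ) < (ℓ : ℝ) + 1 := by positivity
  nlinarith [h1, hℓpos, h2m, mul_pos hℓpos h2m]

/-- For `0 ≤ ℓ < ⌊m/2⌋`, one has `d_{ℓ+1}(m) − d_ℓ(m) > 0`; equivalently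
`∑_{k=ℓ}^{2ℓ} 2^k (2ℓ+1−k) C(2m−2k, m−k) C(m+k, m+ℓ)
  < ∑_{k=2ℓ+2}^{m} 2^k (k−2ℓ−1) C(2m−2k, m−k) C(m+k, m+ℓ)`. -/
theorem delta_d_pos (m ℓ : ℕ) (hm : 1 ≤ m) (hℓ : ℓ < m / 2) :
    0 < d m (ℓ + 1) - d m ℓ ∧
      ∑ k ∈ Finset.Icc ℓ (2 * ℓ),
          2 ^ k * (2 * ℓ + 1 - k) * Nat.choose (2 * m - 2 * k) (m - k) *
            Nat.choose (m + k) (m + ℓ) <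
        ∑ k ∈ Finset.Icc (2 * ℓ + 2) m,
          2 ^ k * (k - (2 * ℓ + 1)) * Nat.choose (2 * m - 2 * k) (m - k) *
            Nat.choose (m + k) (m + ℓ) := by
  have hm2 : 2 * ℓ + 2 ≤ m := by omega
  exact ⟨dpos m ℓ hm2, nat_ineq m ℓ hm2⟩
end

section
/- For every positive integer m and every integer r with 2 ≤ r ≤ m+1, one has C(2r, r) · C(m+1, r) ≤ C(4m, r). -/
/-- For `m ≥ 1` and `2 ≤ r ≤ m+1`, one has `C(2r, r) C(m+1, r) ≤ C(4m, r)`. -/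
theorem choose_ineq (m r : ℕ) (hm : 1 ≤ m) (hr : 2 ≤ r) (hr' : r ≤ m + 1) :
    Nat.choose (2 * r) r * Nat.choose (m + 1) r ≤ Nat.choose (4 * m) r := by
  induction r, hr using Nat.le_induction with
  | base =>
    have h1 : Nat.choose 4 2 = 6 := by decide
    have h2 : Nat.choose (m + 1) 2 * 2 = (m + 1) * m := by
      rw [Nat.choose_two_right]
      simp only [Nat.add_sub_cancel]
      rw [Nat.div_mul_cancel]
      have : Even (m * (m + 1)) := Nat.even_mul_succ_self m
      rw [mul_comm] at this
      exact this.two_dvd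
    have h3 : Nat.choose (4 * m) 2 * 2 = (4 * m) * (4 * m - 1) := by
      rw [Nat.choose_two_right, Nat.div_mul_cancel]
      have h4 : 4 * m = (4 * m - 1) + 1 := by omega
      have : Even ((4 * m - 1) * (4 * m)) := by
        conv_rhs => rw [h4]
        exact Nat.even_mul_succ_self _
      rw [mul_comm] at this
      exact this.two_dvd
    have key : 6 * ((m + 1) * m) ≤ (4 * m) * (4 * m - 1) := by
      have h5 : 4 * m - 1 + 1 = 4 * m := by omega
      nlinarith [Nat.sub_add_cancel (show 1 ≤ 4 * m by omega)]
    have : (Nat.choose 4 2 * Nat.choose (m + 1) 2) * 2 ≤ Nat.choose (4 * m) 2 * 2 := by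
      rw [h1, h3, mul_assoc, h2]; exact key
    have := Nat.le_of_mul_le_mul_right this (by norm_num)
    simpa using this
  | succ r hr ih =>
    have hrm : r ≤ m := by omega
    have ih' := ih (by omega)
    have key : 2 * (2 * r + 1) * (m + 1 - r) ≤ (4 * m - r) * (r + 1) := by
      have h1 : m + 1 - r = m - r + 1 := by omega
      have h4 : 4 * m - r = 3 * r + 4 * (m - r) := by omega
      rw [h1, h4]
      nlinarith [hr]
    have hA : Nat.choose (2 * (r + 1)) (r + 1) * (r + 1)
        = 2 * (2 * r + 1) * Nat.choose (2 * r) r := by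
      have := Nat.succ_mul_centralBinom_succ r
      simp only [Nat.centralBinom] at this
      rw [mul_comm]
      exact this
    have hB := Nat.choose_succ_right_eq (m + 1) r
    have hC := Nat.choose_succ_right_eq (4 * m) r
    have main : (Nat.choose (2 * (r + 1)) (r + 1) * Nat.choose (m + 1) (r + 1))
        * ((r + 1) * (r + 1)) ≤ Nat.choose (4 * m) (r + 1) * ((r + 1) * (r + 1)) := by
      calc (Nat.choose (2 * (r + 1)) (r + 1) * Nat.choose (m + 1) (r + 1))
            * ((r + 1) * (r + 1))
          = (Nat.choose (2 * (r + 1)) (r + 1) * (r + 1))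
            * (Nat.choose (m + 1) (r + 1) * (r + 1)) := by ring
        _ = (2 * (2 * r + 1) * Nat.choose (2 * r) r)
            * (Nat.choose (m + 1) r * (m + 1 - r)) := by rw [hA, hB]
        _ = (Nat.choose (2 * r) r * Nat.choose (m + 1) r)
            * (2 * (2 * r + 1) * (m + 1 - r)) := by ring
        _ ≤ Nat.choose (4 * m) r * ((4 * m - r) * (r + 1)) :=
            Nat.mul_le_mul ih' key
        _ = (Nat.choose (4 * m) r * (4 * m - r)) * (r + 1) := by ring
        _ = (Nat.choose (4 * m) (r + 1) * (r + 1)) * (r + 1) := by rw [hC]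
        _ = Nat.choose (4 * m) (r + 1) * ((r + 1) * (r + 1)) := by ring
    exact Nat.le_of_mul_le_mul_right main (by positivity)
end

section
/- For 0 ≤ x < 1 and an integer m ≥ 1, define W_m(x) = Σ_{r=0}^{m+1} C(2r, r) · C(m+1, r) · C(4m, r)^{-1} · x^r. Then for every fixed x with 0 ≤ x < 1, lim_{m→∞} W_m(x) = 1/√(1−x) and lim_{m→∞} x · W_m'(x) = x/(2(1−x)^{3/2}), where W_m' denotes the derivative of the polynomial W_m. -/
open Finset Nat Filter Topology

lemma descFactorial_mul_pow_le {a b : ℕ} (hab : a ≤ b) (r : ℕ) :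
    a.descFactorial r * b ^ r ≤ b.descFactorial r * a ^ r := by
  induction r with
  | zero => simp
  | succ r ih =>
    rcases le_or_gt (r + 1) a with hr | hr
    · rw [Nat.descFactorial_succ, Nat.descFactorial_succ, pow_succ, pow_succ]
      have key : (a - r) * b ≤ (b - r) * a := by
        rw [Nat.sub_mul, Nat.sub_mul]
        have h1 : r * a ≤ r * b := Nat.mul_le_mul_left r hab
        have h2 : r * a ≤ a * b := by
          calc r * a ≤ a * a := Nat.mul_le_mul_right a (by omega)
          _ ≤ a * b := Nat.mul_le_mul_left a hab
        have h3 : a * b = b * a := Nat.mul_comm a b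
        omega
      calc (a - r) * a.descFactorial r * (b ^ r * b)
          = (a - r) * b * (a.descFactorial r * b ^ r) := by ring
        _ ≤ (b - r) * a * (b.descFactorial r * a ^ r) :=
            Nat.mul_le_mul key ih
        _ = (b - r) * b.descFactorial r * (a ^ r * a) := by ring
    · rw [Nat.descFactorial_eq_zero_iff_lt.2 hr]
      simp

lemma choose_mul_pow_le {a b : ℕ} (hab : a ≤ b) (r : ℕ) :
    a.choose r * b ^ r ≤ b.choose r * a ^ r := by
  have h := descFactorial_mul_pow_le hab r
  rw [Nat.descFactorial_eq_factorial_mul_choose, Nat.descFactorial_eq_factorial_mul_choose,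
    mul_assoc, mul_assoc] at h
  exact Nat.le_of_mul_le_mul_left h r.factorial_pos

lemma two_mul_sum_reflect (n : ℕ) :
    2 * ∑ k ∈ range (n + 1), k * (centralBinom k * centralBinom (n - k))
      = n * ∑ k ∈ range (n + 1), centralBinom k * centralBinom (n - k) := by
  have h := Finset.sum_range_reflect
    (fun k => k * (centralBinom k * centralBinom (n - k))) (n + 1)
  have h2 : ∑ k ∈ range (n + 1), (n - k) * (centralBinom (n - k) * centralBinom k)
      = ∑ k ∈ range (n + 1), k * (centralBinom k * centralBinom (n - k)) := by
    rw [← h]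
    apply Finset.sum_congr rfl
    intro k hk
    simp only [Finset.mem_range] at hk
    have hk' : k ≤ n := by omega
    have : n + 1 - 1 - k = n - k := by omega
    rw [this]
    congr 1
    rw [Nat.sub_sub_self hk']
  rw [two_mul, Finset.mul_sum]
  nth_rewrite 2 [← h2]
  rw [← Finset.sum_add_distrib]
  apply Finset.sum_congr rfl
  intro k hk
  simp only [Finset.mem_range] at hk
  have hk' : k ≤ n := by omega
  have : (n - k) * (centralBinom (n - k) * centralBinom k)
      = (n - k) * (centralBinom k * centralBinom (n - k)) := by ring
  rw [this, ← Nat.add_mul, Nat.add_sub_cancel' hk']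

lemma centralBinom_conv (n : ℕ) :
    ∑ k ∈ range (n + 1), centralBinom k * centralBinom (n - k) = 4 ^ n := by
  induction n with
  | zero => simp [centralBinom]
  | succ n ih =>
    have hA : ∑ k ∈ range (n + 2), k * (centralBinom k * centralBinom (n + 1 - k))
        = 4 * ∑ k ∈ range (n + 1), k * (centralBinom k * centralBinom (n - k))
          + 2 * ∑ k ∈ range (n + 1), centralBinom k * centralBinom (n - k) := by
      rw [Finset.sum_range_succ' (fun k => k * (centralBinom k * centralBinom (n + 1 - k)))]
      simp only [Nat.zero_eq, zero_mul, add_zero]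
      rw [Finset.mul_sum, Finset.mul_sum, ← Finset.sum_add_distrib]
      apply Finset.sum_congr rfl
      intro k hk
      have hs : n + 1 - (k + 1) = n - k := by omega
      rw [hs]
      have := Nat.succ_mul_centralBinom_succ k
      calc (k + 1) * (centralBinom (k + 1) * centralBinom (n - k))
          = ((k + 1) * centralBinom (k + 1)) * centralBinom (n - k) := by ring
        _ = (2 * (2 * k + 1) * centralBinom k) * centralBinom (n - k) := by rw [this]
        _ = 4 * (k * (centralBinom k * centralBinom (n - k)))
            + 2 * (centralBinom k * centralBinom (n - k)) := by ring
    have key : (n + 1) * ∑ k ∈ range (n + 2), centralBinom k * centralBinom (n + 1 - k)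
        = (n + 1) * (4 * ∑ k ∈ range (n + 1), centralBinom k * centralBinom (n - k)) := by
      have h2A := two_mul_sum_reflect n
      calc (n + 1) * ∑ k ∈ range (n + 2), centralBinom k * centralBinom (n + 1 - k)
          = 2 * ∑ k ∈ range (n + 2), k * (centralBinom k * centralBinom (n + 1 - k)) :=
            (two_mul_sum_reflect (n + 1)).symm
        _ = 4 * (2 * ∑ k ∈ range (n + 1), k * (centralBinom k * centralBinom (n - k)))
            + 4 * ∑ k ∈ range (n + 1), centralBinom k * centralBinom (n - k) := by
            rw [hA]; ring
        _ = 4 * (n * ∑ k ∈ range (n + 1), centralBinom k * centralBinom (n - k))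
            + 4 * ∑ k ∈ range (n + 1), centralBinom k * centralBinom (n - k) := by rw [h2A]
        _ = (n + 1) * (4 * ∑ k ∈ range (n + 1), centralBinom k * centralBinom (n - k)) := by
            ring
    have := Nat.eq_of_mul_eq_mul_left (Nat.succ_pos n) key
    rw [this, ih]
    ring

lemma centralBinom_le_four_pow (n : ℕ) : centralBinom n ≤ 4 ^ n :=
  calc centralBinom n = (2 * n).choose n := rfl
    _ ≤ (2 * n + 1).choose n := Nat.choose_le_choose n (Nat.le_succ _)
    _ ≤ 4 ^ n := Nat.choose_middle_le_pow n

section Series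


variable {x : ℝ}

lemma term_nonneg (hx0 : 0 ≤ x) (r : ℕ) : 0 ≤ (centralBinom r : ℝ) * (x / 4) ^ r := by
  positivity

lemma term_le (hx0 : 0 ≤ x) (r : ℕ) : (centralBinom r : ℝ) * (x / 4) ^ r ≤ x ^ r := by
  have h1 : (centralBinom r : ℝ) ≤ 4 ^ r := by exact_mod_cast _root_.centralBinom_le_four_pow r
  have h2 : (0 : ℝ) ≤ (x / 4) ^ r := by positivity
  calc (centralBinom r : ℝ) * (x / 4) ^ r ≤ 4 ^ r * (x / 4) ^ r :=
        mul_le_mul_of_nonneg_right h1 h2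
    _ = x ^ r := by rw [← mul_pow, show (4:ℝ) * (x / 4) = x by ring]

lemma summable_cb (hx0 : 0 ≤ x) (hx1 : x < 1) :
    Summable (fun r => (centralBinom r : ℝ) * (x / 4) ^ r) :=
  Summable.of_nonneg_of_le (term_nonneg hx0) (term_le hx0) (summable_geometric_of_lt_one hx0 hx1)

lemma summable_cb' (hx0 : 0 ≤ x) (hx1 : x < 1) :
    Summable (fun r : ℕ => (r : ℝ) * ((centralBinom r : ℝ) * (x / 4) ^ r)) := by
  apply Summable.of_nonneg_of_le
    (fun r => by positivity)
    (fun r => ?_)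
    ((summable_pow_mul_geometric_of_norm_lt_one 1
      (by rwa [Real.norm_of_nonneg hx0] : ‖x‖ < 1)).congr (fun n => by rw [pow_one]))
  exact mul_le_mul_of_nonneg_left (term_le hx0 r) (Nat.cast_nonneg r)

lemma tsum_cb (hx0 : 0 ≤ x) (hx1 : x < 1) :
    ∑' r, (centralBinom r : ℝ) * (x / 4) ^ r = 1 / Real.sqrt (1 - x) := by
  have h1x : (0 : ℝ) < 1 - x := by linarith
  set S := ∑' r, (centralBinom r : ℝ) * (x / 4) ^ r with hSdef
  have hnorm : Summable (fun r => ‖(centralBinom r : ℝ) * (x / 4) ^ r‖) :=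
    (summable_cb hx0 hx1).congr (fun r => (Real.norm_of_nonneg (term_nonneg hx0 r)).symm)
  have hSS : S * S = (1 - x)⁻¹ := by
    rw [hSdef, tsum_mul_tsum_eq_tsum_sum_range_of_summable_norm hnorm hnorm]
    have hinner : ∀ n, ∑ k ∈ range (n + 1),
        ((centralBinom k : ℝ) * (x / 4) ^ k) *
          ((centralBinom (n - k) : ℝ) * (x / 4) ^ (n - k)) = x ^ n := by
      intro n
      have : ∀ k ∈ range (n + 1),
          ((centralBinom k : ℝ) * (x / 4) ^ k) *
            ((centralBinom (n - k) : ℝ) * (x / 4) ^ (n - k))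
          = ((centralBinom k * centralBinom (n - k) : ℕ) : ℝ) * (x / 4) ^ n := by
        intro k hk
        simp only [Finset.mem_range] at hk
        have hkn : k + (n - k) = n := by omega
        have hp : (x / 4) ^ k * (x / 4) ^ (n - k) = (x / 4) ^ n := by rw [← pow_add, hkn]
        rw [Nat.cast_mul, ← hp]
        ring
      rw [Finset.sum_congr rfl this, ← Finset.sum_mul, ← Nat.cast_sum, centralBinom_conv]
      push_cast
      rw [← mul_pow, show (4:ℝ) * (x / 4) = x by ring]
    rw [tsum_congr hinner, tsum_geometric_of_lt_one hx0 hx1]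
  have hSpos : 0 < S := by
    apply Summable.tsum_pos (summable_cb hx0 hx1) (fun r => term_nonneg hx0 r) 0
    simp [Nat.centralBinom]
  have : S = Real.sqrt (S * S) := (Real.sqrt_mul_self hSpos.le).symm
  rw [this, hSS, Real.sqrt_inv, one_div]

lemma tsum_cb' (hx0 : 0 ≤ x) (hx1 : x < 1) :
    ∑' r : ℕ, (r : ℝ) * ((centralBinom r : ℝ) * (x / 4) ^ r)
      = x / (2 * (1 - x) ^ ((3 : ℝ) / 2)) := by
  have h1x : (0 : ℝ) < 1 - x := by linarith
  set S := ∑' r, (centralBinom r : ℝ) * (x / 4) ^ r with hSdef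
  set G := ∑' r : ℕ, (r : ℝ) * ((centralBinom r : ℝ) * (x / 4) ^ r) with hGdef
  have hrec : ∀ j : ℕ, ((j + 1 : ℕ) : ℝ) * ((centralBinom (j + 1) : ℝ) * (x / 4) ^ (j + 1))
      = x * ((j : ℝ) * ((centralBinom j : ℝ) * (x / 4) ^ j))
        + (x / 2) * ((centralBinom j : ℝ) * (x / 4) ^ j) := by
    intro j
    have h := Nat.succ_mul_centralBinom_succ j
    have hcast : ((j : ℝ) + 1) * (centralBinom (j + 1) : ℝ)
        = 2 * (2 * (j : ℝ) + 1) * (centralBinom j : ℝ) := by exact_mod_cast h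
    have : ((j + 1 : ℕ) : ℝ) * ((centralBinom (j + 1) : ℝ) * (x / 4) ^ (j + 1))
        = (((j : ℝ) + 1) * (centralBinom (j + 1) : ℝ)) * ((x / 4) ^ j * (x / 4)) := by
      push_cast
      rw [pow_succ]
      ring
    rw [this, hcast]
    ring
  have hG : G = x * G + (x / 2) * S := by
    conv_lhs => rw [hGdef, Summable.tsum_eq_zero_add (summable_cb' hx0 hx1)]
    simp only [Nat.cast_zero, zero_mul, zero_add]
    rw [tsum_congr hrec,
      Summable.tsum_add ((summable_cb' hx0 hx1).mul_left x) ((summable_cb hx0 hx1).mul_left (x / 2)),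
      tsum_mul_left, tsum_mul_left]
  have hS := tsum_cb hx0 hx1
  rw [← hSdef] at hS
  have hGval : G * (1 - x) = (x / 2) * S := by linarith [hG]
  have hsqrt_pos : 0 < Real.sqrt (1 - x) := Real.sqrt_pos.2 h1x
  have hpow : (1 - x) ^ ((3 : ℝ) / 2) = (1 - x) * Real.sqrt (1 - x) := by
    rw [show (3 : ℝ) / 2 = 1 + 1 / 2 by norm_num, Real.rpow_add h1x, Real.rpow_one,
      Real.sqrt_eq_rpow]
  rw [hpow]
  rw [hS] at hGval
  have h1x' : (1 - x) ≠ 0 := ne_of_gt h1x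
  field_simp at hGval ⊢
  linarith [hGval]
end Series




/-- `W m x = ∑_{r=0}^{m+1} C(2r, r) C(m+1, r) C(4m, r)⁻¹ x^r`. -/
noncomputable def W (m : ℕ) (x : ℝ) : ℝ :=
  ∑ r ∈ Finset.range (m + 2),
    (Nat.choose (2 * r) r : ℝ) * (Nat.choose (m + 1) r : ℝ) *
      ((Nat.choose (4 * m) r : ℝ))⁻¹ * x ^ r

lemma cast_choose_eq (n r : ℕ) (h : r ≤ n) :
    (Nat.choose n r : ℝ) = (∏ i ∈ range r, ((n : ℝ) - i)) / r ! := by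
  have hcast : ((n.descFactorial r : ℕ) : ℝ) = ∏ i ∈ range r, ((n : ℝ) - i) := by
    rw [Nat.descFactorial_eq_prod_range, Nat.cast_prod]
    refine Finset.prod_congr rfl fun i hi => ?_
    simp only [Finset.mem_range] at hi
    exact Nat.cast_sub (le_trans (Nat.le_of_lt hi) h)
  rw [eq_div_iff (by positivity : ((r ! : ℕ) : ℝ) ≠ 0), ← hcast]
  exact_mod_cast (by rw [Nat.descFactorial_eq_factorial_mul_choose]; ring :
    n.choose r * r ! = n.descFactorial r)

lemma tendsto_lin_div (a b c d : ℝ) (hc : 0 < c) :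
    Tendsto (fun m : ℕ => (a * m + b) / (c * m + d)) atTop (𝓝 (a / c)) := by
  have h1 : Tendsto (fun m : ℕ => a + b / m) atTop (𝓝 a) := by
    simpa using tendsto_const_nhds.add (tendsto_const_div_atTop_nhds_zero_nat b)
  have h2 : Tendsto (fun m : ℕ => c + d / m) atTop (𝓝 c) := by
    simpa using tendsto_const_nhds.add (tendsto_const_div_atTop_nhds_zero_nat d)
  apply (h1.div h2 (ne_of_gt hc)).congr'
  filter_upwards [eventually_ge_atTop 1] with m hm
  have hm0 : (m : ℝ) ≠ 0 := by
    have : (0 : ℝ) < m := by exact_mod_cast hm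
    exact ne_of_gt this
  have e1 : a * (m : ℝ) + b = (a + b / m) * m := by field_simp
  have e2 : c * (m : ℝ) + d = (c + d / m) * m := by field_simp
  show (a + b / (m : ℝ)) / (c + d / m) = (a * m + b) / (c * m + d)
  rw [e1, e2, mul_div_mul_right _ _ hm0]

lemma ratio_tendsto (r : ℕ) :
    Tendsto (fun m : ℕ => (Nat.choose (m + 1) r : ℝ) * ((Nat.choose (4 * m) r : ℝ))⁻¹)
      atTop (𝓝 ((4 : ℝ)⁻¹ ^ r)) := by
  have hfac : ∀ i : ℕ, Tendsto (fun m : ℕ => ((m : ℝ) + 1 - i) / (4 * m - i)) atTop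
      (𝓝 ((4 : ℝ)⁻¹)) := by
    intro i
    have h := tendsto_lin_div 1 (1 - i) 4 (-i) (by norm_num)
    rw [show (1 : ℝ) / 4 = (4 : ℝ)⁻¹ by norm_num] at h
    exact h.congr fun m => by ring_nf
  have hprod := tendsto_finset_prod (range r)
    (fun i (_ : i ∈ range r) => hfac i)
  rw [Finset.prod_const, Finset.card_range] at hprod
  apply hprod.congr'
  filter_upwards [eventually_ge_atTop (r + 1)] with m hm
  have hr1 : r ≤ m + 1 := by omega
  have hr4 : r ≤ 4 * m := by omega
  have hQ : (∏ i ∈ range r, (((4 * m : ℕ) : ℝ) - i)) ≠ 0 := by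
    refine Finset.prod_ne_zero_iff.2 fun i hi => ?_
    simp only [Finset.mem_range] at hi
    have : (i : ℝ) < ((4 * m : ℕ) : ℝ) := by exact_mod_cast lt_of_lt_of_le hi hr4
    exact ne_of_gt (by linarith)
  have hf : ((r ! : ℕ) : ℝ) ≠ 0 := by positivity
  refine Eq.symm ?_
  rw [cast_choose_eq _ _ hr1, cast_choose_eq _ _ hr4, inv_div]
  rw [div_mul_div_comm (α := ℝ)]
  rw [mul_comm ((r ! : ℕ) : ℝ) (∏ i ∈ range r, (((4 * m : ℕ) : ℝ) - i))]
  rw [mul_div_mul_right _ _ hf, ← Finset.prod_div_distrib]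
  refine Finset.prod_congr rfl fun i hi => ?_
  push_cast
  ring_nf

lemma ratio_le {m r : ℕ} (hm : 1 ≤ m) (hr : r ≤ m + 1) :
    (Nat.choose (m + 1) r : ℝ) * ((Nat.choose (4 * m) r : ℝ))⁻¹
      ≤ (((m : ℝ) + 1) / (4 * m)) ^ r := by
  have hab : m + 1 ≤ 4 * m := by omega
  have h := choose_mul_pow_le hab r
  have hc4 : 0 < Nat.choose (4 * m) r := Nat.choose_pos (le_trans hr hab)
  have hc4' : (0 : ℝ) < (Nat.choose (4 * m) r : ℝ) := by exact_mod_cast hc4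
  have hm4 : (0 : ℝ) < (4 * m : ℝ) := by positivity
  have hcast : ((m + 1).choose r : ℝ) * ((4 : ℝ) * m) ^ r
      ≤ ((4 * m).choose r : ℝ) * ((m : ℝ) + 1) ^ r := by exact_mod_cast h
  rw [div_pow, ← div_eq_mul_inv, div_le_div_iff₀ hc4' (by positivity)]
  linarith [hcast]

/-- For fixed `0 ≤ x < 1`, `lim_{m→∞} W_m(x) = 1/√(1−x)` and
`lim_{m→∞} x W_m'(x) = x/(2(1−x)^{3/2})`. -/
theorem W_limits (x : ℝ) (hx0 : 0 ≤ x) (hx1 : x < 1) :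
    Filter.Tendsto (fun m : ℕ => W m x) Filter.atTop (nhds (1 / Real.sqrt (1 - x))) ∧
      Filter.Tendsto (fun m : ℕ => x * deriv (W m) x) Filter.atTop
        (nhds (x / (2 * (1 - x) ^ ((3 : ℝ) / 2)))) := by
  set q : ℝ := (1 + x) / 2 with hqdef
  have hq0 : 0 ≤ q := by positivity
  have hq1 : q < 1 := by rw [hqdef]; linarith
  -- coefficients
  set a : ℕ → ℕ → ℝ := fun m r =>
    (Nat.choose (2 * r) r : ℝ) * (Nat.choose (m + 1) r : ℝ) *
      ((Nat.choose (4 * m) r : ℝ))⁻¹ with hadef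
  set F : ℕ → ℕ → ℝ := fun m r => if r < m + 2 then a m r * x ^ r else 0 with hFdef
  set F' : ℕ → ℕ → ℝ := fun m r => if r < m + 2 then (r : ℝ) * (a m r * x ^ r) else 0 with hF'def
  set g : ℕ → ℝ := fun r => (centralBinom r : ℝ) * (x / 4) ^ r with hgdef
  -- the index from which the bound holds
  obtain ⟨N, hN1, hNle⟩ : ∃ N : ℕ, 1 ≤ N ∧ ∀ m : ℕ, N ≤ m → ((m : ℝ) + 1) / m * x ≤ q := by
    obtain ⟨N', hN'⟩ := exists_nat_gt (2 * x / (1 - x))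
    refine ⟨max N' 1, le_max_right _ _, fun m hm => ?_⟩
    have hm1 : 1 ≤ m := le_trans (le_max_right _ _) hm
    have hmr : (0 : ℝ) < m := by exact_mod_cast hm1
    have h1x : (0 : ℝ) < 1 - x := by linarith
    have hmN' : (2 * x / (1 - x)) < (m : ℝ) := by
      have : (N' : ℝ) ≤ m := by exact_mod_cast le_trans (le_max_left _ _) hm
      linarith
    have key : 2 * x < (m : ℝ) * (1 - x) := by
      rw [div_lt_iff₀ h1x] at hmN'
      linarith
    rw [div_mul_eq_mul_div, div_le_iff₀ hmr]
    nlinarith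
  -- pointwise limits
  have hab : ∀ r : ℕ, Tendsto (fun m => F m r) atTop (𝓝 (g r)) := by
    intro r
    have h := ((ratio_tendsto r).const_mul ((Nat.choose (2 * r) r : ℕ) : ℝ)).mul_const (x ^ r)
    have hlim : ((Nat.choose (2 * r) r : ℕ) : ℝ) * (4 : ℝ)⁻¹ ^ r * x ^ r = g r := by
      rw [hgdef]
      simp only [Nat.centralBinom_eq_two_mul_choose, div_pow, inv_pow]
      ring
    rw [hlim] at h
    apply h.congr'
    filter_upwards [eventually_ge_atTop r] with m hm
    have : r < m + 2 := by omega
    simp only [hFdef, if_pos this, hadef]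
    ring
  have hab' : ∀ r : ℕ, Tendsto (fun m => F' m r) atTop (𝓝 ((r : ℝ) * g r)) := by
    intro r
    have h := (hab r).const_mul (r : ℝ)
    apply h.congr'
    filter_upwards [eventually_ge_atTop r] with m hm
    have hlt : r < m + 2 := by omega
    simp only [hFdef, hF'def, if_pos hlt]
  -- bounds
  have hbound_core : ∀ m : ℕ, N ≤ m → ∀ r : ℕ, r < m + 2 → a m r * x ^ r ≤ q ^ r := by
    intro m hm r hr
    have hm1 : 1 ≤ m := le_trans hN1 hm
    have hmr : (0 : ℝ) < m := by exact_mod_cast hm1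
    have h1 : ((Nat.choose (2 * r) r : ℕ) : ℝ) ≤ 4 ^ r := by
      exact_mod_cast calc Nat.choose (2 * r) r = centralBinom r :=
          (Nat.centralBinom_eq_two_mul_choose r).symm
        _ ≤ 4 ^ r := _root_.centralBinom_le_four_pow r
    have h2 := ratio_le hm1 (by omega : r ≤ m + 1)
    have hr2 : (0 : ℝ) ≤ (Nat.choose (m + 1) r : ℝ) * ((Nat.choose (4 * m) r : ℝ))⁻¹ := by
      positivity
    have step1 : a m r * x ^ r
        ≤ 4 ^ r * ((((m : ℝ) + 1) / (4 * m)) ^ r) * x ^ r := by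
      simp only [hadef]
      have hx : (0 : ℝ) ≤ x ^ r := by positivity
      apply mul_le_mul_of_nonneg_right _ hx
      rw [mul_assoc]
      exact mul_le_mul h1 h2 hr2 (by positivity)
    have step2 : (4 : ℝ) ^ r * ((((m : ℝ) + 1) / (4 * m)) ^ r) * x ^ r
        = (((m : ℝ) + 1) / m * x) ^ r := by
      rw [← mul_pow, ← mul_pow]
      congr 1
      field_simp
    have step3 : (((m : ℝ) + 1) / m * x) ^ r ≤ q ^ r := by
      apply pow_le_pow_left₀ (by positivity) (hNle m hm)
    linarith [step1, step2 ▸ step1, step3]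
  have haFnonneg : ∀ m r, 0 ≤ F m r := by
    intro m r
    rw [hFdef]
    dsimp only
    split
    · simp only [hadef]; positivity
    · exact le_refl 0
  have hbound : ∀ᶠ m in atTop, ∀ r : ℕ, ‖F m r‖ ≤ q ^ r := by
    filter_upwards [eventually_ge_atTop N] with m hm r
    rw [Real.norm_of_nonneg (haFnonneg m r), hFdef]
    dsimp only
    split
    · exact hbound_core m hm r (by assumption)
    · positivity
  have hbound' : ∀ᶠ m in atTop, ∀ r : ℕ, ‖F' m r‖ ≤ (r : ℝ) * q ^ r := by
    filter_upwards [eventually_ge_atTop N] with m hm r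
    have h0 : 0 ≤ F' m r := by
      rw [hF'def]
      dsimp only
      split
      · have := haFnonneg m r
        rw [hFdef] at this
        dsimp only at this
        rw [if_pos (by assumption)] at this
        positivity
      · exact le_refl 0
    rw [Real.norm_of_nonneg h0, hF'def]
    dsimp only
    split
    · exact mul_le_mul_of_nonneg_left (hbound_core m hm r (by assumption)) (Nat.cast_nonneg r)
    · positivity
  have hsumq : Summable (fun r : ℕ => q ^ r) := summable_geometric_of_lt_one hq0 hq1
  have hsumq' : Summable (fun r : ℕ => (r : ℝ) * q ^ r) :=
    ((summable_pow_mul_geometric_of_norm_lt_one 1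
      (by rwa [Real.norm_of_nonneg hq0] : ‖q‖ < 1)).congr (fun n => by rw [pow_one]))
  -- tsum identities
  have hW : ∀ m : ℕ, W m x = ∑' r, F m r := by
    intro m
    rw [tsum_eq_sum (s := range (m + 2)) (fun r hr => by
      simp only [hFdef]
      rw [if_neg (by simpa using hr)])]
    unfold W
    refine (Finset.sum_congr rfl fun r hr => ?_).symm
    simp only [Finset.mem_range] at hr
    simp only [hFdef, if_pos hr, hadef]
  have hderiv : ∀ m : ℕ, x * deriv (W m) x = ∑' r, F' m r := by
    intro m
    have hD : HasDerivAt (W m)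
        (∑ r ∈ range (m + 2),
          (Nat.choose (2 * r) r : ℝ) * (Nat.choose (m + 1) r : ℝ) *
            ((Nat.choose (4 * m) r : ℝ))⁻¹ * ((r : ℕ) * x ^ (r - 1))) x := by
      unfold W
      exact HasDerivAt.fun_sum fun r _ => (hasDerivAt_pow r x).const_mul _
    rw [hD.deriv, Finset.mul_sum]
    rw [tsum_eq_sum (s := range (m + 2)) (fun r hr => by
      simp only [hF'def]
      rw [if_neg (by simpa using hr)])]
    refine Finset.sum_congr rfl fun r hr => ?_
    simp only [Finset.mem_range] at hr
    simp only [hF'def, if_pos hr, hadef]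
    rcases r with _ | s
    · simp
    · simp only [Nat.add_sub_cancel]
      rw [pow_succ]
      push_cast
      ring
  constructor
  · have h := tendsto_tsum_of_dominated_convergence hsumq hab hbound
    rw [show ∑' r, g r = 1 / Real.sqrt (1 - x) from tsum_cb hx0 hx1] at h
    exact h.congr fun m => (hW m).symm
  · have h := tendsto_tsum_of_dominated_convergence hsumq' hab' hbound'
    rw [show ∑' r : ℕ, (r : ℝ) * g r = x / (2 * (1 - x) ^ ((3 : ℝ) / 2)) from
      tsum_cb' hx0 hx1] at h
    exact h.congr fun m => (hderiv m).symm
end
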